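/- arXiv:1709.00529 — 8 statements merged into one kernel-verified Lean document; each statement's English description precedes it below -/
import Mathlib

section
/- Let 0 < α < 1 and let β with 0 < β < π/2 be the smallest positive root of 2x - (1+α) tan x = 0. Then β ≥ arctan(sqrt((1-α)/(1+α))). -/
open Real Set

lemma arctan_ge_div (t : ℝ) (ht : 0 < t) : t / (1 + t ^ 2) ≤ Real.arctan t := by
  obtain ⟨c, hc, hc'⟩ := exists_hasDerivAt_eq_slope Real.arctan (fun x => 1 / (1 + x ^ 2)) ht
    (Real.continuous_arctan.continuousOn)
    (fun x _ => Real.hasDerivAt_arctan x)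
  rw [Real.arctan_zero, sub_zero, sub_zero] at hc'
  have h1 : Real.arctan t = t * (1 / (1 + c ^ 2)) := by
    rw [hc']
    field_simp
  rw [h1]
  have hc0 : 0 < c := hc.1
  have hct : c < t := hc.2
  have h2 : 1 + c ^ 2 ≤ 1 + t ^ 2 := by nlinarith
  have h3 : 0 < 1 + c ^ 2 := by positivity
  rw [div_le_iff₀ (by positivity)]
  rw [mul_one_div, div_mul_eq_mul_div, le_div_iff₀ h3]
  nlinarith

/-- If `β ∈ (0, π/2)` is the smallest positive root of `2x - (1+α) tan x = 0` for `0 < α < 1`,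
then `β ≥ arctan √((1-α)/(1+α))`. -/
theorem root_lower_bound (α β : ℝ) (hα0 : 0 < α) (hα1 : α < 1)
    (hβ0 : 0 < β) (hβπ : β < π / 2)
    (hroot : 2 * β - (1 + α) * Real.tan β = 0)
    (hmin : ∀ x ∈ Ioo 0 (π / 2), 2 * x - (1 + α) * Real.tan x = 0 → β ≤ x) :
    β ≥ Real.arctan (Real.sqrt ((1 - α) / (1 + α))) := by
  set t := Real.tan β with htdef
  have ht : 0 < t := Real.tan_pos_of_pos_of_lt_pi_div_two hβ0 hβπ
  have hβt : β = Real.arctan t := by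
    rw [htdef, Real.arctan_tan (by linarith [Real.pi_div_two_pos]) hβπ]
  have heq : 2 * β = (1 + α) * t := by linarith
  have hkey : t / (1 + t ^ 2) ≤ Real.arctan t := arctan_ge_div t ht
  have h2 : 2 * (t / (1 + t ^ 2)) ≤ (1 + α) * t := by
    rw [← heq, hβt]; linarith
  have hpos : (0:ℝ) < 1 + t ^ 2 := by positivity
  have hsq : (1 - α) / (1 + α) ≤ t ^ 2 := by
    rw [← mul_div_assoc, div_le_iff₀ hpos] at h2
    rw [div_le_iff₀ (by linarith)]
    nlinarith [mul_pos ht ht]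
  have hsqrt : Real.sqrt ((1 - α) / (1 + α)) ≤ t := by
    calc Real.sqrt ((1 - α) / (1 + α)) ≤ Real.sqrt (t ^ 2) := Real.sqrt_le_sqrt hsq
    _ = t := by rw [Real.sqrt_sq ht.le]
  rw [hβt, ge_iff_le]
  exact Real.arctan_strictMono.monotone hsqrt
end

section
/- Let 0 ≤ α < 1 and let c_α be the smallest positive root of 2√x - (1+α) tan(√x) = 0. Then for every c with 0 < c ≤ c_α and every complex z with |z| < 1, one has Re(z√c · cot(z√c)) > (α+1)/2. -/
/-!
Write `w = z√c = x + iy` and `t = (1 + α)/2`. Then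
`Re (w cot w) = (x sin x cos x + y sinh y cosh y) / (sin² x + sinh² y)`, so it suffices that
`t sin² x ≤ x sin x cos x` and `t sinh² y ≤ y sinh y cosh y`, one of them strictly. The
hyperbolic inequality is `tanh y ≤ y`. For the trigonometric one: `u ↦ u cos u - t sin u` is
strictly concave on `[0, π/2]`, and by minimality of `c_α` (plus an intermediate value
argument) `s = √c_α` is a zero of it in `(0, π/2)`; hence it is positive on `(0, s)`, which
contains `|x|`.
-/

open Real Set

lemma sinh_le_mul_cosh {y : ℝ} (hy : 0 ≤ y) : sinh y ≤ y * cosh y := by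
  have hderiv (u : ℝ) : HasDerivAt (fun v => v * cosh v - sinh v) (u * sinh u) u :=
    (((hasDerivAt_id' u).mul (hasDerivAt_cosh u)).sub (hasDerivAt_sinh u)).congr_deriv (by ring)
  have hmono : MonotoneOn (fun v => v * cosh v - sinh v) (Ici 0) := by
    refine monotoneOn_of_deriv_nonneg (convex_Ici 0) (by fun_prop)
      (fun u _ => (hderiv u).differentiableAt.differentiableWithinAt) fun u hu => ?_
    rw [interior_Ici] at hu
    rw [(hderiv u).deriv]
    exact mul_nonneg hu.le (sinh_nonneg_iff.2 hu.le)
  simpa using hmono self_mem_Ici hy hy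

lemma sinh_sq_le_mul_sinh_mul_cosh (y : ℝ) : sinh y ^ 2 ≤ y * sinh y * cosh y := by
  wlog hy : 0 ≤ y generalizing y
  · simpa using this (-y) (by linarith)
  nlinarith [sinh_le_mul_cosh hy, sinh_nonneg_iff.2 hy]

lemma mul_sinh_sq_lt_mul_sinh_mul_cosh {t y : ℝ} (ht : t < 1) (hy : y ≠ 0) :
    t * sinh y ^ 2 < y * sinh y * cosh y := by
  have : 0 < sinh y ^ 2 := by
    have : sinh y ≠ 0 := by rwa [Ne, sinh_eq_zero]
    positivity
  nlinarith [sinh_sq_le_mul_sinh_mul_cosh y]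

lemma strictConcaveOn_mul_cos_sub_mul_sin {t : ℝ} (ht : t < 2) :
    StrictConcaveOn ℝ (Icc 0 (π / 2)) fun u => u * cos u - t * sin u := by
  have hderiv : deriv (fun u => u * cos u - t * sin u) = fun u => cos u - u * sin u - t * cos u :=
    funext fun u => ((((hasDerivAt_id' u).mul (hasDerivAt_cos u)).sub
      ((hasDerivAt_sin u).const_mul t)).congr_deriv (by ring)).deriv
  have hderiv2 (u : ℝ) :
      deriv^[2] (fun u => u * cos u - t * sin u) u = (t - 2) * sin u - u * cos u := by
    rw [Function.iterate_succ_apply, Function.iterate_one, hderiv]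
    exact ((((hasDerivAt_cos u).sub ((hasDerivAt_id' u).mul (hasDerivAt_sin u))).sub
      ((hasDerivAt_cos u).const_mul t)).congr_deriv (by ring)).deriv
  refine strictConcaveOn_of_deriv2_neg (convex_Icc _ _) (by fun_prop) fun u hu => ?_
  rw [interior_Icc] at hu
  have hsin : 0 < sin u := sin_pos_of_pos_of_lt_pi hu.1 (by linarith [hu.2, pi_pos])
  have hcos : 0 < cos u := cos_pos_of_mem_Ioo ⟨by linarith [hu.1, pi_pos], hu.2⟩
  rw [hderiv2]
  nlinarith [mul_pos hu.1 hcos]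

lemma mul_cos_sub_mul_sin_pos {s t x : ℝ} (hs : s ≤ π / 2) (ht : t < 2)
    (hroot : s * cos s = t * sin s) (hx : x ∈ Ioo 0 s) : 0 < x * cos x - t * sin x := by
  have hs0 : 0 < s := hx.1.trans hx.2
  have hconc := (strictConcaveOn_mul_cos_sub_mul_sin ht).subset (Icc_subset_Icc_right hs)
    (convex_Icc 0 s)
  simpa [hroot] using hconc.lt_on_openSegment (left_mem_Icc.2 hs0.le) (right_mem_Icc.2 hs0.le)
    hs0.ne (by rwa [openSegment_eq_Ioo hs0])

lemma mul_sin_sq_lt_mul_sin_mul_cos {s t x : ℝ} (hs : s ≤ π / 2) (ht : t < 2)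
    (hroot : s * cos s = t * sin s) (hx0 : x ≠ 0) (hxs : |x| < s) :
    t * sin x ^ 2 < x * sin x * cos x := by
  wlog hx : 0 < x generalizing x
  · simpa using this (neg_ne_zero.2 hx0) (by rwa [abs_neg]) (by grind)
  have hxs' : x < s := (le_abs_self x).trans_lt hxs
  have hsin : 0 < sin x := sin_pos_of_pos_of_lt_pi hx (by linarith [pi_pos])
  nlinarith [mul_pos hsin (mul_cos_sub_mul_sin_pos hs ht hroot ⟨hx, hxs'⟩)]

lemma two_mul_sub_mul_tan_eq_zero_iff {a u : ℝ} (hu : 0 < cos u) :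
    2 * u - a * tan u = 0 ↔ u * cos u = a / 2 * sin u := by
  rw [tan_eq_sin_div_cos]
  constructor <;> intro h <;> field_simp at h ⊢ <;> linarith

lemma exists_mul_cos_eq_mul_sin {t : ℝ} (ht0 : 0 < t) (ht1 : t < 1) :
    ∃ u ∈ Ioo 0 (π / 2), u * cos u = t * sin u := by
  set k : ℝ → ℝ := fun u => u * cos u - t * sin u
  -- at `u₀ = √(1 - t)` the bounds `sin u < u`, `1 - u²/2 < cos u` already force `k u₀ > 0`
  set u₀ := √(1 - t)
  have hu₀ : 0 < u₀ := sqrt_pos.2 (by linarith)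
  have hu₀sq : u₀ ^ 2 = 1 - t := sq_sqrt (by linarith)
  have hu₀lt : u₀ < π / 2 := by
    have : u₀ < 1 := (sqrt_lt' one_pos).2 (by linarith)
    linarith [pi_gt_three]
  have hk₀ : 0 < k u₀ := by
    have hcos := mul_lt_mul_of_pos_left (one_sub_sq_div_two_lt_cos hu₀.ne') hu₀
    have hsin := mul_lt_mul_of_pos_left (sin_lt hu₀) ht0
    simp only [k]
    nlinarith
  have hk₁ : k (π / 2) < 0 := by simpa [k] using ht0
  obtain ⟨u, hu, hku⟩ := intermediate_value_Ioo' hu₀lt.le (by fun_prop) ⟨hk₁, hk₀⟩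
  exact ⟨u, ⟨hu₀.trans hu.1, hu.2⟩, sub_eq_zero.1 hku⟩

lemma sqrt_lt_pi_div_two_of_forall_root_le {α c : ℝ} (hα0 : -1 < α) (hα1 : α < 1)
    (hmin : ∀ x : ℝ, 0 < x → 2 * √x - (1 + α) * tan √x = 0 → c ≤ x) :
    √c < π / 2 := by
  obtain ⟨u, hu, hroot⟩ := exists_mul_cos_eq_mul_sin (t := (1 + α) / 2) (by linarith)
    (by linarith)
  have hcos : 0 < cos u := cos_pos_of_mem_Ioo ⟨by linarith [hu.1, pi_pos], hu.2⟩
  have hc : c ≤ u ^ 2 := hmin _ (by nlinarith [hu.1]) <| by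
    rwa [sqrt_sq hu.1.le, two_mul_sub_mul_tan_eq_zero_iff hcos]
  calc √c ≤ √(u ^ 2) := sqrt_le_sqrt hc
    _ = u := sqrt_sq hu.1.le
    _ < π / 2 := hu.2

lemma Complex.re_mul_cos_div_sin (w : ℂ) :
    (w * (cos w / sin w)).re =
      (w.re * Real.sin w.re * Real.cos w.re + w.im * Real.sinh w.im * Real.cosh w.im) /
        (Real.sin w.re ^ 2 + Real.sinh w.im ^ 2) := by
  obtain ⟨hsin_re, hsin_im⟩ : (sin w).re = Real.sin w.re * Real.cosh w.im ∧
      (sin w).im = Real.cos w.re * Real.sinh w.im := by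
    rw [sin_eq]
    constructor <;> simp [← ofReal_sin, ← ofReal_cosh, ← ofReal_cos, ← ofReal_sinh]
  obtain ⟨hcos_re, hcos_im⟩ : (cos w).re = Real.cos w.re * Real.cosh w.im ∧
      (cos w).im = -(Real.sin w.re * Real.sinh w.im) := by
    rw [cos_eq]
    constructor <;> simp [← ofReal_sin, ← ofReal_cosh, ← ofReal_cos, ← ofReal_sinh]
  have pyth := Real.sin_sq_add_cos_sq w.re
  have hyp := Real.cosh_sq w.im
  have hnormSq : normSq (sin w) = Real.sin w.re ^ 2 + Real.sinh w.im ^ 2 := by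
    rw [normSq_apply, hsin_re, hsin_im]
    linear_combination Real.sin w.re ^ 2 * hyp + Real.sinh w.im ^ 2 * pyth
  rw [mul_div_assoc', div_re, hnormSq, ← add_div]
  simp only [mul_re, mul_im, hsin_re, hsin_im, hcos_re, hcos_im]
  congr 1
  linear_combination (w.re * Real.sin w.re * Real.cos w.re) * hyp +
    (w.im * Real.sinh w.im * Real.cosh w.im) * pyth

lemma lt_re_mul_cos_div_sin {s t : ℝ} (hs : s ≤ π / 2) (ht : t < 1)
    (hroot : s * cos s = t * sin s) {w : ℂ} (hw0 : w ≠ 0) (hws : ‖w‖ < s) :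
    t < (w * (Complex.cos w / Complex.sin w)).re := by
  rw [Complex.re_mul_cos_div_sin]
  set x := w.re
  set y := w.im
  have hxs : |x| < s := (Complex.abs_re_le_norm w).trans_lt hws
  have hne : x ≠ 0 ∨ y ≠ 0 := by
    by_contra! h
    exact hw0 (Complex.ext h.1 h.2)
  have hx_le : t * sin x ^ 2 ≤ x * sin x * cos x := by
    rcases eq_or_ne x 0 with hx | hx
    · simp [hx]
    · exact (mul_sin_sq_lt_mul_sin_mul_cos hs (by linarith) hroot hx hxs).le
  have hy_le : t * sinh y ^ 2 ≤ y * sinh y * cosh y := by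
    rcases eq_or_ne y 0 with hy | hy
    · simp [hy]
    · exact (mul_sinh_sq_lt_mul_sinh_mul_cosh ht hy).le
  have hD : 0 < sin x ^ 2 + sinh y ^ 2 := by
    rcases hne with hx | hy
    · have : sin x ≠ 0 := by
        rwa [Ne, sin_eq_zero_iff_of_lt_of_lt (by linarith [neg_abs_le x, pi_pos])
          (by linarith [le_abs_self x, pi_pos])]
      positivity
    · have : sinh y ≠ 0 := by rwa [Ne, sinh_eq_zero]
      positivity
  rw [lt_div_iff₀ hD]
  rcases hne with hx | hy
  · linarith [mul_sin_sq_lt_mul_sin_mul_cos hs (by linarith) hroot hx hxs]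
  · linarith [mul_sinh_sq_lt_mul_sinh_mul_cosh ht hy]

theorem re_cot_gt_general (α cα : ℝ) (hα0 : 0 ≤ α) (hα1 : α < 1)
    (hroot : 2 * Real.sqrt cα - (1 + α) * Real.tan (Real.sqrt cα) = 0)
    (hmin : ∀ x : ℝ, 0 < x →
      2 * Real.sqrt x - (1 + α) * Real.tan (Real.sqrt x) = 0 → cα ≤ x) :
    ∀ c : ℝ, 0 < c → c ≤ cα → ∀ z : ℂ, ‖z‖ < 1 →
      (if z = 0 then (1 : ℝ)
        else (z * (Real.sqrt c : ℂ) *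
          (Complex.cos (z * (Real.sqrt c : ℂ)) /
            Complex.sin (z * (Real.sqrt c : ℂ)))).re) > (α + 1) / 2 := by
  intro c hc hccα z hz
  split_ifs with hz0
  · linarith
  have hs : √cα < π / 2 := sqrt_lt_pi_div_two_of_forall_root_le (by linarith) hα1 hmin
  have hcos : 0 < cos √cα := cos_pos_of_mem_Ioo ⟨by linarith [sqrt_nonneg cα, pi_pos], hs⟩
  have hsqrt_c : 0 < √c := sqrt_pos.2 hc
  have hw : ‖z * (√c : ℂ)‖ < √cα := calc
    ‖z * (√c : ℂ)‖ = ‖z‖ * √c := by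
      rw [norm_mul, Complex.norm_real, norm_of_nonneg hsqrt_c.le]
    _ < 1 * √c := mul_lt_mul_of_pos_right hz hsqrt_c
    _ ≤ √cα := by rw [one_mul]; exact sqrt_le_sqrt hccα
  rw [add_comm α]
  exact lt_re_mul_cos_div_sin hs.le (by linarith)
    ((two_mul_sub_mul_tan_eq_zero_iff hcos).1 hroot)
    (mul_ne_zero hz0 (Complex.ofReal_ne_zero.2 hsqrt_c.ne')) hw

/-- Let `0 ≤ α < 1` and `c_α` the smallest positive root of `2√x - (1+α) tan √x = 0`.
Then for `0 < c ≤ c_α` and `|z| < 1`, `Re(z√c cot(z√c)) > (α+1)/2`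
(at `z = 0` understood with value `1`). -/
theorem re_cot_gt (α cα : ℝ) (hα0 : 0 ≤ α) (hα1 : α < 1)
    (hcα : 0 < cα)
    (hroot : 2 * Real.sqrt cα - (1 + α) * Real.tan (Real.sqrt cα) = 0)
    (hmin : ∀ x : ℝ, 0 < x →
      2 * Real.sqrt x - (1 + α) * Real.tan (Real.sqrt x) = 0 → cα ≤ x) :
    ∀ c : ℝ, 0 < c → c ≤ cα → ∀ z : ℂ, ‖z‖ < 1 →
      (if z = 0 then (1 : ℝ)
        else (z * (Real.sqrt c : ℂ) *
          (Complex.cos (z * (Real.sqrt c : ℂ)) /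
            Complex.sin (z * (Real.sqrt c : ℂ)))).re) > (α + 1) / 2 :=
  re_cot_gt_general α cα hα0 hα1 hroot hmin
end

section
/- Let 0 ≤ α < 1, c > 0, and x, y real with x² + y² < 1 and x, y ≥ 0, and suppose 0 < c ≤ c_α where c_α < π²/4 is the smallest positive root of 2√t - (1+α) tan √t = 0. Then sin(√c x) cos(√c x) [2√c x - (1+α) tan(√c x)] ≥ sinh(√c y) cosh(√c y) [(1+α) tanh(√c y) - 2√c y], with strict inequality unless both sides vanish appropriately. -/
/-! For `s = √c x ∈ [0, √cα]`: `tan` is convex on `[0, π/2)` and vanishes at `0`, so `tan s / s` is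
nondecreasing, and up to the root `√cα` of `(1 + α) tan t = 2t` this gives `(1 + α) tan s ≤ 2s`;
hence the left side is `≥ 0`. The right side is `≤ 0` because `tanh t ≤ t` for `t ≥ 0`
(`sinh t ≤ t cosh t`, whose difference has derivative `t sinh t ≥ 0`). -/

open Real

namespace Real

lemma sinh_le_mul_cosh {s : ℝ} (hs : 0 ≤ s) : sinh s ≤ s * cosh s := by
  have hmono : MonotoneOn (fun t ↦ t * cosh t - sinh t) (Set.Ici 0) := by
    refine monotoneOn_of_hasDerivWithinAt_nonneg (convex_Ici 0) (by fun_prop)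
      (fun t _ ↦ (((hasDerivAt_id t).mul (hasDerivAt_cosh t)).sub
        (hasDerivAt_sinh t)).hasDerivWithinAt) fun t ht ↦ ?_
    rw [interior_Ici] at ht
    have : 0 ≤ t * sinh t := mul_nonneg ht.le (sinh_nonneg_iff.mpr ht.le)
    simp only [id, one_mul]
    linarith
  simpa using hmono Set.self_mem_Ici hs hs

lemma tanh_le_self {s : ℝ} (hs : 0 ≤ s) : tanh s ≤ s := by
  rw [tanh_eq_sinh_div_cosh, div_le_iff₀ (cosh_pos s)]
  exact sinh_le_mul_cosh hs

lemma tanh_nonneg {s : ℝ} (hs : 0 ≤ s) : 0 ≤ tanh s := by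
  rw [tanh_eq_sinh_div_cosh]
  exact div_nonneg (sinh_nonneg_iff.mpr hs) (cosh_pos s).le

lemma mul_tanh_le_mul {k m s : ℝ} (hkm : k ≤ m) (hm : 0 ≤ m) (hs : 0 ≤ s) :
    k * tanh s ≤ m * s := by
  nlinarith [tanh_le_self hs, tanh_nonneg hs]

lemma convexOn_tan : ConvexOn ℝ (Set.Ico 0 (π / 2)) tan := by
  have hcos : ∀ t ∈ Set.Ico 0 (π / 2), 0 < cos t := fun t ht ↦
    cos_pos_of_mem_Ioo ⟨by linarith [ht.1, pi_pos], ht.2⟩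
  refine MonotoneOn.convexOn_of_deriv (convex_Ico 0 (π / 2))
    (continuousOn_tan.mono fun t ht ↦ (hcos t ht).ne') ?_ ?_ <;> rw [interior_Ico]
  · exact fun t ht ↦
      (differentiableAt_tan.mpr (hcos t (Set.Ioo_subset_Ico_self ht)).ne').differentiableWithinAt
  · intro t ht u hu htu
    simp only [deriv_tan]
    have hcos_u := hcos u (Set.Ioo_subset_Ico_self hu)
    gcongr
    exact cos_le_cos_of_nonneg_of_le_pi ht.1.le (by linarith [hu.2, pi_pos]) htu

lemma mul_tan_le_mul_tan {a s : ℝ} (hs : 0 ≤ s) (hsa : s ≤ a) (ha : a < π / 2) :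
    a * tan s ≤ s * tan a := by
  rcases hs.eq_or_lt with rfl | hs
  · simp
  have := convexOn_tan.secant_mono (a := 0) ⟨le_rfl, by linarith⟩ ⟨hs.le, by linarith⟩
    ⟨by linarith, ha⟩ hs.ne' (by linarith) hsa
  simp only [tan_zero, sub_zero] at this
  rw [div_le_div_iff₀ hs (by linarith)] at this
  linarith

lemma mul_tan_le_of_mul_tan_eq {k m a s : ℝ} (hk : 0 ≤ k) (ha0 : 0 < a) (ha : a < π / 2)
    (hroot : k * tan a = m * a) (hs : 0 ≤ s) (hsa : s ≤ a) : k * tan s ≤ m * s := by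
  refine le_of_mul_le_mul_left ?_ ha0
  calc a * (k * tan s) = k * (a * tan s) := by ring
    _ ≤ k * (s * tan a) := mul_le_mul_of_nonneg_left (mul_tan_le_mul_tan hs hsa ha) hk
    _ = a * (m * s) := by rw [mul_left_comm, hroot]; ring

end Real

theorem key_inequality_general (α cα c x y : ℝ) (hα0 : 0 ≤ α) (hα1 : α < 1)
    (hcα0 : 0 < cα) (hcαπ : cα < π ^ 2 / 4)
    (hroot : 2 * Real.sqrt cα - (1 + α) * Real.tan (Real.sqrt cα) = 0)
    (hc : c ≤ cα)
    (hx : 0 ≤ x) (hy : 0 ≤ y) (hxy : x ^ 2 + y ^ 2 < 1) :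
    Real.sin (Real.sqrt c * x) * Real.cos (Real.sqrt c * x) *
        (2 * Real.sqrt c * x - (1 + α) * Real.tan (Real.sqrt c * x)) ≥
      Real.sinh (Real.sqrt c * y) * Real.cosh (Real.sqrt c * y) *
        ((1 + α) * Real.tanh (Real.sqrt c * y) - 2 * Real.sqrt c * y) := by
  have ha0 : 0 < √cα := sqrt_pos.mpr hcα0
  have ha : √cα < π / 2 := (sqrt_lt' (by positivity)).mpr (by linarith)
  have hs0 : 0 ≤ √c * x := by positivity
  have hsa : √c * x ≤ √cα := by
    nlinarith [sqrt_le_sqrt hc, sqrt_nonneg c, sq_nonneg y]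
  have htan : (1 + α) * tan (√c * x) ≤ 2 * (√c * x) :=
    mul_tan_le_of_mul_tan_eq (by linarith) ha0 ha (by linarith) hs0 hsa
  have htanh : (1 + α) * tanh (√c * y) ≤ 2 * (√c * y) :=
    mul_tanh_le_mul (by linarith) zero_le_two (by positivity)
  have hleft : 0 ≤ sin (√c * x) * cos (√c * x) * (2 * √c * x - (1 + α) * tan (√c * x)) := by
    refine mul_nonneg (mul_nonneg ?_ ?_) (by linarith)
    · exact sin_nonneg_of_nonneg_of_le_pi hs0 (by linarith [pi_pos])
    · exact cos_nonneg_of_mem_Icc ⟨by linarith [pi_pos], by linarith⟩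
  have hright : sinh (√c * y) * cosh (√c * y) * ((1 + α) * tanh (√c * y) - 2 * √c * y) ≤ 0 :=
    mul_nonpos_of_nonneg_of_nonpos
      (mul_nonneg (sinh_nonneg_iff.mpr (by positivity)) (cosh_pos _).le) (by linarith)
  exact hright.trans hleft

/-- The key real-variable inequality: for `0 ≤ α < 1`, `0 < c ≤ c_α`, `x, y ≥ 0` with
`x² + y² < 1`,
`sin(√c x) cos(√c x) [2√c x - (1+α) tan(√c x)] ≥
  sinh(√c y) cosh(√c y) [(1+α) tanh(√c y) - 2√c y]`. -/
theorem key_inequality (α cα c x y : ℝ) (hα0 : 0 ≤ α) (hα1 : α < 1)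
    (hcα0 : 0 < cα) (hcαπ : cα < π ^ 2 / 4)
    (hroot : 2 * Real.sqrt cα - (1 + α) * Real.tan (Real.sqrt cα) = 0)
    (hmin : ∀ t : ℝ, 0 < t →
      2 * Real.sqrt t - (1 + α) * Real.tan (Real.sqrt t) = 0 → cα ≤ t)
    (hc0 : 0 < c) (hc : c ≤ cα)
    (hx : 0 ≤ x) (hy : 0 ≤ y) (hxy : x ^ 2 + y ^ 2 < 1) :
    Real.sin (Real.sqrt c * x) * Real.cos (Real.sqrt c * x) *
        (2 * Real.sqrt c * x - (1 + α) * Real.tan (Real.sqrt c * x)) ≥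
      Real.sinh (Real.sqrt c * y) * Real.cosh (Real.sqrt c * y) *
        ((1 + α) * Real.tanh (Real.sqrt c * y) - 2 * Real.sqrt c * y) :=
  key_inequality_general α cα c x y hα0 hα1 hcα0 hcαπ hroot hc hx hy hxy
end

section
/- Let y(ρ) be a continuously differentiable real function on [0,1) with y(ρ) = O(ρ) as ρ → 0. Then for 0 < r < 1 and c > 0 with √c · r < π/2: r ∫₀ʳ y'(ρ)² dρ - c r ∫₀ʳ y(ρ)² dρ - √c · r · cot(√c r) · y(r)² ≥ 0, and equality holds for y(ρ) = c^{-1/2} sin(√c ρ). -/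
/-!
The function `w ρ = √c cot (√c ρ)` solves the Riccati equation `w' = -c - w²` on `(0, r]`,
so for every `C¹` function `y` one has Picone's identity
`(w y²)' = y'² - c y² - (y' - w y)²`. Integrating over `[ε, r]` and letting `ε → 0`, where
`w y² → 0` because `w ρ ≤ 1 / ρ` (from `tan t ≥ t`) and `y ρ = O(ρ)`, gives
`w r · y(r)² ≤ ∫₀ʳ (y'² - c y²)`. Equality holds for `y = sin (√c ρ) / √c`,
for which `y' = w y`.
-/

open Real Set intervalIntegral Filter Topology

section Riccati

variable {w y : ℝ → ℝ} {c : ℝ}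

theorem hasDerivAt_mul_sq_of_riccati {x d : ℝ} (hw : HasDerivAt w (-c - w x ^ 2) x)
    (hy : HasDerivAt y d x) :
    HasDerivAt (fun t => w t * y t ^ 2) (d ^ 2 - c * y x ^ 2 - (d - w x * y x) ^ 2) x := by
  refine (hw.mul (hy.pow 2)).congr_deriv ?_
  simp only [Pi.pow_apply]
  ring

variable {y' : ℝ → ℝ} {a b : ℝ}

theorem mul_sq_sub_le_integral_of_riccati (hab : a ≤ b)
    (hw : ∀ x ∈ Icc a b, HasDerivAt w (-c - w x ^ 2) x)
    (hy : ∀ x ∈ Icc a b, HasDerivAt y (y' x) x) (hy' : ContinuousOn y' (Icc a b)) :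
    w b * y b ^ 2 - w a * y a ^ 2 ≤ ∫ x in a..b, (y' x ^ 2 - c * y x ^ 2) := by
  have hwc : ContinuousOn w (Icc a b) := fun x hx => (hw x hx).continuousAt.continuousWithinAt
  have hyc : ContinuousOn y (Icc a b) := fun x hx => (hy x hx).continuousAt.continuousWithinAt
  have hF : ∀ x ∈ uIcc a b, HasDerivAt (fun t => w t * y t ^ 2)
      (y' x ^ 2 - c * y x ^ 2 - (y' x - w x * y x) ^ 2) x := fun x hx =>
    hasDerivAt_mul_sq_of_riccati (hw x (uIcc_of_le hab ▸ hx)) (hy x (uIcc_of_le hab ▸ hx))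
  have hint : ∀ f : ℝ → ℝ, ContinuousOn f (Icc a b) →
      IntervalIntegrable f MeasureTheory.volume a b :=
    fun f hf => (uIcc_of_le hab ▸ hf).intervalIntegrable
  rw [← integral_eq_sub_of_hasDerivAt hF (hint _ (by fun_prop))]
  exact integral_mono_on hab (hint _ (by fun_prop)) (hint _ (by fun_prop))
    fun x _ => sub_le_self _ (sq_nonneg _)

theorem mul_sq_sub_le_integral_of_riccati_of_tendsto {L : ℝ} (hab : a < b)
    (hw : ∀ x ∈ Ioc a b, HasDerivAt w (-c - w x ^ 2) x)
    (hy : ∀ x ∈ Icc a b, HasDerivAt y (y' x) x) (hy' : ContinuousOn y' (Icc a b))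
    (hlim : Tendsto (fun x => w x * y x ^ 2) (𝓝[>] a) (𝓝 L)) :
    w b * y b ^ 2 - L ≤ ∫ x in a..b, (y' x ^ 2 - c * y x ^ 2) := by
  have hyc : ContinuousOn y (Icc a b) := fun x hx => (hy x hx).continuousAt.continuousWithinAt
  have hprim : Tendsto (fun ε => ∫ x in ε..b, (y' x ^ 2 - c * y x ^ 2)) (𝓝[>] a)
      (𝓝 (∫ x in a..b, (y' x ^ 2 - c * y x ^ 2))) := by
    have h := continuousOn_primitive_interval_left (μ := MeasureTheory.volume)
      (f := fun x => y' x ^ 2 - c * y x ^ 2) (a := a) (b := b)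
      (by rw [uIcc_of_le hab.le]; exact (by fun_prop : ContinuousOn _ _).integrableOn_Icc)
    rw [uIcc_of_le hab.le] at h
    rw [← nhdsWithin_Ioo_eq_nhdsGT hab]
    exact (h a (left_mem_Icc.2 hab.le)).mono Ioo_subset_Icc_self
  refine le_of_tendsto_of_tendsto (tendsto_const_nhds.sub hlim) hprim ?_
  filter_upwards [Ioo_mem_nhdsGT hab] with ε hε
  exact mul_sq_sub_le_integral_of_riccati hε.2.le
    (fun x hx => hw x ⟨hε.1.trans_le hx.1, hx.2⟩)
    (fun x hx => hy x ⟨hε.1.le.trans hx.1, hx.2⟩) (hy'.mono (Icc_subset_Icc_left hε.1.le))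

end Riccati

theorem hasDerivAt_mul_cot_mul (s : ℝ) {x : ℝ} (hx : sin (s * x) ≠ 0) :
    HasDerivAt (fun t => s * (cos (s * t) / sin (s * t)))
      (-s ^ 2 - (s * (cos (s * x) / sin (s * x))) ^ 2) x := by
  have hlin : HasDerivAt (fun t => s * t) s x := by simpa using (hasDerivAt_id x).const_mul s
  refine (((hasDerivAt_cos _).comp x hlin).div ((hasDerivAt_sin _).comp x hlin) hx
    |>.const_mul s).congr_deriv ?_
  simp only [Function.comp_apply]
  field_simp

theorem mul_cot_mul_mem_Icc {s x : ℝ} (hs : 0 < s) (hx : 0 < x) (hsx : s * x < π / 2) :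
    s * (cos (s * x) / sin (s * x)) ∈ Icc 0 x⁻¹ := by
  have hpos : 0 < s * x := mul_pos hs hx
  have hcos : 0 < cos (s * x) := cos_pos_of_mem_Ioo ⟨by linarith [pi_pos], hsx⟩
  have hsin : 0 < sin (s * x) := sin_pos_of_pos_of_lt_pi hpos (by linarith [pi_pos])
  have htan := lt_tan hpos hsx
  rw [tan_eq_sin_div_cos, lt_div_iff₀ hcos] at htan
  refine ⟨by positivity, ?_⟩
  calc s * (cos (s * x) / sin (s * x)) = s * x * cos (s * x) / sin (s * x) * x⁻¹ := by
        field_simp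
    _ ≤ 1 * x⁻¹ := by gcongr; exact (div_le_one hsin).2 htan.le
    _ = x⁻¹ := one_mul _

theorem tendsto_mul_cot_mul_mul_sq {s C : ℝ} {y : ℝ → ℝ} (hs : 0 < s)
    (hy : ∀ᶠ x in 𝓝[>] 0, |y x| ≤ C * x) :
    Tendsto (fun x => s * (cos (s * x) / sin (s * x)) * y x ^ 2) (𝓝[>] 0) (𝓝 0) := by
  have hsmall : ∀ᶠ x in 𝓝[>] (0 : ℝ), s * x < π / 2 := by
    have : Tendsto (fun x => s * x) (𝓝[>] (0 : ℝ)) (𝓝 0) := by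
      simpa using ((continuous_const_mul s).tendsto 0).mono_left nhdsWithin_le_nhds
    exact this.eventually (gt_mem_nhds (by positivity))
  have hC : Tendsto (fun x => C ^ 2 * x) (𝓝[>] (0 : ℝ)) (𝓝 0) := by
    simpa using ((continuous_const_mul (C ^ 2)).tendsto 0).mono_left nhdsWithin_le_nhds
  have hcot : ∀ᶠ x in 𝓝[>] (0 : ℝ), s * (cos (s * x) / sin (s * x)) ∈ Icc 0 x⁻¹ := by
    filter_upwards [hsmall, self_mem_nhdsWithin] with x hsx hx
    exact mul_cot_mul_mem_Icc hs hx hsx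
  refine squeeze_zero' ?_ ?_ hC
  · filter_upwards [hcot] with x hx
    exact mul_nonneg hx.1 (sq_nonneg _)
  · filter_upwards [hcot, hy, self_mem_nhdsWithin] with x hx hyx (hx0 : 0 < x)
    calc s * (cos (s * x) / sin (s * x)) * y x ^ 2 ≤ x⁻¹ * (C * x) ^ 2 :=
          mul_le_mul hx.2 (sq_le_sq' (abs_le.1 hyx).1 (abs_le.1 hyx).2) (sq_nonneg _)
            (inv_nonneg.2 hx0.le)
      _ = C ^ 2 * x := by field_simp

noncomputable def gabrielFunctional (c r : ℝ) (y : ℝ → ℝ) : ℝ :=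
  (r * ∫ ρ in (0 : ℝ)..r, deriv y ρ ^ 2) - (c * r * ∫ ρ in (0 : ℝ)..r, y ρ ^ 2) -
    √c * r * (cos (√c * r) / sin (√c * r)) * y r ^ 2

theorem gabrielFunctional_sin_eq_zero {c : ℝ} (hc : 0 < c) (r : ℝ) :
    gabrielFunctional c r (fun t => (√c)⁻¹ * sin (√c * t)) = 0 := by
  unfold gabrielFunctional
  obtain ⟨s, hs, rfl⟩ : ∃ s, 0 < s ∧ c = s ^ 2 :=
    ⟨√c, sqrt_pos.2 hc, (sq_sqrt hc.le).symm⟩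
  rw [sqrt_sq hs.le]
  have hderiv : deriv (fun t => s⁻¹ * sin (s * t)) = fun t => cos (s * t) := by
    funext t
    have h : HasDerivAt (fun t => s⁻¹ * sin (s * t)) (s⁻¹ * (cos (s * t) * (s * 1))) t :=
      ((hasDerivAt_id t).const_mul s).sin.const_mul s⁻¹
    rw [h.deriv]
    field_simp
  have hsin_sq : ∀ t, (s⁻¹ * sin (s * t)) ^ 2 = s⁻¹ ^ 2 * sin (s * t) ^ 2 := fun t => by
    ring
  simp only [hderiv, hsin_sq, integral_const_mul,
    integral_comp_mul_left (fun t => cos t ^ 2) hs.ne',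
    integral_comp_mul_left (fun t => sin t ^ 2) hs.ne',
    integral_cos_sq, integral_sin_sq, smul_eq_mul, mul_zero, sin_zero, cos_zero]
  field_simp
  ring

theorem gabrielFunctional_nonneg {c r : ℝ} {y : ℝ → ℝ} (hc : 0 < c) (hr : 0 < r)
    (hcr : √c * r < π / 2) (hy : ∀ x ∈ Icc 0 r, DifferentiableAt ℝ y x)
    (hy' : ContinuousOn (deriv y) (Icc 0 r)) (hO : ∃ C, ∀ x ∈ Icc 0 r, |y x| ≤ C * x) :
    0 ≤ gabrielFunctional c r y := by
  obtain ⟨C, hC⟩ := hO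
  set s := √c
  have hs : 0 < s := sqrt_pos.2 hc
  have hs2 : s ^ 2 = c := sq_sqrt hc.le
  have hw : ∀ x ∈ Ioc 0 r, HasDerivAt (fun t => s * (cos (s * t) / sin (s * t)))
      (-c - (s * (cos (s * x) / sin (s * x))) ^ 2) x := fun x hx => by
    refine hs2 ▸ hasDerivAt_mul_cot_mul s (sin_pos_of_pos_of_lt_pi (mul_pos hs hx.1) ?_).ne'
    nlinarith [pi_pos, hx.2]
  have hlim := tendsto_mul_cot_mul_mul_sq hs <| by
    filter_upwards [Ioo_mem_nhdsGT hr] with x hx using hC x ⟨hx.1.le, hx.2.le⟩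
  have key := mul_sq_sub_le_integral_of_riccati_of_tendsto hr hw
    (fun x hx => (hy x hx).hasDerivAt) hy' hlim
  have hyc : ContinuousOn y (Icc 0 r) := fun x hx => (hy x hx).continuousAt.continuousWithinAt
  rw [integral_sub ((uIcc_of_le hr.le ▸ hy'.pow 2).intervalIntegrable)
    ((uIcc_of_le hr.le ▸ (hyc.pow 2).const_smul c).intervalIntegrable), integral_const_mul] at key
  unfold gabrielFunctional
  nlinarith [mul_le_mul_of_nonneg_left key hr.le]

theorem gabriel_variational_general (y : ℝ → ℝ)
    (hy' : ContinuousOn (deriv y) (Ico (0 : ℝ) 1))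
    (hdiff : ∀ ρ ∈ Ico (0 : ℝ) 1, DifferentiableAt ℝ y ρ)
    (hO : ∃ C : ℝ, 0 < C ∧ ∀ ρ ∈ Ico (0 : ℝ) 1, |y ρ| ≤ C * ρ)
    (r c : ℝ) (hr0 : 0 < r) (hr1 : r < 1) (hc : 0 < c)
    (hcr : Real.sqrt c * r < π / 2) :
    0 ≤ (r * ∫ ρ in (0 : ℝ)..r, (deriv y ρ) ^ 2) -
        (c * r * ∫ ρ in (0 : ℝ)..r, (y ρ) ^ 2) -
        Real.sqrt c * r * (Real.cos (Real.sqrt c * r) / Real.sin (Real.sqrt c * r)) *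
          (y r) ^ 2 ∧
      (r * ∫ ρ in (0 : ℝ)..r,
            (deriv (fun t => (Real.sqrt c)⁻¹ * Real.sin (Real.sqrt c * t)) ρ) ^ 2) -
          (c * r * ∫ ρ in (0 : ℝ)..r,
            ((Real.sqrt c)⁻¹ * Real.sin (Real.sqrt c * ρ)) ^ 2) -
          Real.sqrt c * r * (Real.cos (Real.sqrt c * r) / Real.sin (Real.sqrt c * r)) *
            ((Real.sqrt c)⁻¹ * Real.sin (Real.sqrt c * r)) ^ 2 = 0 := by
  obtain ⟨C, -, hC⟩ := hO
  have hsub : Icc 0 r ⊆ Ico 0 1 := Icc_subset_Ico_right hr1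
  exact ⟨gabrielFunctional_nonneg hc hr0 hcr (fun x hx => hdiff x (hsub hx)) (hy'.mono hsub)
      ⟨C, fun x hx => hC x (hsub hx)⟩,
    gabrielFunctional_sin_eq_zero hc r⟩

/-- Gabriel's variational lemma: if `y` is `C¹` on `[0,1)` with `y(ρ) = O(ρ)` near `0`,
then for `0 < r < 1`, `c > 0` with `√c r < π/2`,
`r∫₀ʳ y'² - c r∫₀ʳ y² - √c r cot(√c r) y(r)² ≥ 0`,
with equality for `y(ρ) = c^{-1/2} sin(√c ρ)`. -/
theorem gabriel_variational (y : ℝ → ℝ)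
    (hy : ContinuousOn y (Ico (0 : ℝ) 1))
    (hy' : ContinuousOn (deriv y) (Ico (0 : ℝ) 1))
    (hdiff : ∀ ρ ∈ Ico (0 : ℝ) 1, DifferentiableAt ℝ y ρ)
    (hO : ∃ C : ℝ, 0 < C ∧ ∀ ρ ∈ Ico (0 : ℝ) 1, |y ρ| ≤ C * ρ)
    (r c : ℝ) (hr0 : 0 < r) (hr1 : r < 1) (hc : 0 < c)
    (hcr : Real.sqrt c * r < π / 2) :
    0 ≤ (r * ∫ ρ in (0 : ℝ)..r, (deriv y ρ) ^ 2) -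
        (c * r * ∫ ρ in (0 : ℝ)..r, (y ρ) ^ 2) -
        Real.sqrt c * r * (Real.cos (Real.sqrt c * r) / Real.sin (Real.sqrt c * r)) *
          (y r) ^ 2 ∧
      (r * ∫ ρ in (0 : ℝ)..r,
            (deriv (fun t => (Real.sqrt c)⁻¹ * Real.sin (Real.sqrt c * t)) ρ) ^ 2) -
          (c * r * ∫ ρ in (0 : ℝ)..r,
            ((Real.sqrt c)⁻¹ * Real.sin (Real.sqrt c * ρ)) ^ 2) -
          Real.sqrt c * r * (Real.cos (Real.sqrt c * r) / Real.sin (Real.sqrt c * r)) *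
            ((Real.sqrt c)⁻¹ * Real.sin (Real.sqrt c * r)) ^ 2 = 0 :=
  gabriel_variational_general y hy' hdiff hO r c hr0 hr1 hc hcr
end

section
/- Let w be an analytic solution on the unit disk of w'' + p(z) w = 0 with w(0) = 0, w'(0) = 1, where p is analytic. Then for 0 < r < 1 and fixed θ: |w(re^{iθ})|² · Re( re^{iθ} w'(re^{iθ}) / w(re^{iθ}) ) = r ∫₀ʳ |w'(ρe^{iθ})|² dρ - r ∫₀ʳ Re( ρ² e^{2iθ} p(ρe^{iθ}) ) · |w(ρe^{iθ})|²/ρ² dρ. -/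
open Metric intervalIntegral ComplexConjugate

/-! Along the ray, `f t = w (t e^{iθ})` solves `f'' = -e^{2iθ} p f`, so
`(Re (conj f · f'))' = |f'|² - Re (e^{2iθ} p) |f|²`; integrating over `[0, r]`, where `f 0 = 0`,
gives the identity after multiplying by `r`. -/

theorem Complex.norm_sq_mul_re_div (u v : ℂ) : ‖v‖ ^ 2 * (u / v).re = (conj v * u).re := by
  rcases eq_or_ne v 0 with rfl | hv
  · simp
  have h : conj v * u = ((‖v‖ ^ 2 : ℝ) : ℂ) * (u / v) := by
    rw [Complex.ofReal_pow, ← Complex.mul_conj', mul_comm v, mul_assoc, mul_div_cancel₀ _ hv]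
  rw [h, Complex.re_ofReal_mul]

theorem hasDerivAt_comp_ofReal_mul {F : ℂ → ℂ} {F' e : ℂ} {t : ℝ}
    (hF : HasDerivAt F F' (t * e)) : HasDerivAt (fun s : ℝ => F (s * e)) (e * F') t := by
  have h := (hF.comp (t : ℂ) ((hasDerivAt_id (t : ℂ)).mul_const e)).comp_ofReal
  simpa [mul_comm] using h

theorem re_conj_mul_deriv_sub_eq_integral_sub_integral {f f' f'' q : ℝ → ℂ} {a b : ℝ}
    (hf : ∀ t ∈ Set.uIcc a b, HasDerivAt f (f' t) t)
    (hf' : ∀ t ∈ Set.uIcc a b, HasDerivAt f' (f'' t) t)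
    (hode : ∀ t ∈ Set.uIcc a b, f'' t = -(q t * f t))
    (hq : ContinuousOn q (Set.uIcc a b)) :
    (conj (f b) * f' b).re - (conj (f a) * f' a).re =
      (∫ t in a..b, ‖f' t‖ ^ 2) - ∫ t in a..b, (q t).re * ‖f t‖ ^ 2 := by
  have hfc : ContinuousOn f (Set.uIcc a b) := fun t ht => (hf t ht).continuousAt.continuousWithinAt
  have hf'c : ContinuousOn f' (Set.uIcc a b) :=
    fun t ht => (hf' t ht).continuousAt.continuousWithinAt
  have hA : IntervalIntegrable (fun t => ‖f' t‖ ^ 2) MeasureTheory.volume a b :=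
    (hf'c.norm.pow 2).intervalIntegrable
  have hB : IntervalIntegrable (fun t => (q t).re * ‖f t‖ ^ 2) MeasureTheory.volume a b :=
    ((Complex.continuous_re.comp_continuousOn hq).mul (hfc.norm.pow 2)).intervalIntegrable
  have hderiv : ∀ t ∈ Set.uIcc a b, HasDerivAt (fun s => (conj (f s) * f' s).re)
      (‖f' t‖ ^ 2 - (q t).re * ‖f t‖ ^ 2) t := by
    intro t ht
    refine (Complex.reCLM.hasFDerivAt.comp_hasDerivAt t
      (((hf t ht).star).mul (hf' t ht))).congr_deriv ?_
    have hconj : ∀ z : ℂ, conj z * z = ((‖z‖ ^ 2 : ℝ) : ℂ) := fun z => by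
      rw [Complex.conj_mul', Complex.ofReal_pow]
    have hsplit : star (f' t) * f' t + star (f t) * f'' t
        = ((‖f' t‖ ^ 2 : ℝ) : ℂ) - q t * ((‖f t‖ ^ 2 : ℝ) : ℂ) := by
      rw [hode t ht, ← hconj, ← hconj]; simp only [Complex.star_def]; ring
    rw [Complex.reCLM_apply, hsplit, Complex.sub_re, Complex.re_mul_ofReal, Complex.ofReal_re]
  rw [← integral_sub hA hB, integral_eq_sub_of_hasDerivAt hderiv (hA.sub hB)]

theorem ofReal_mul_mem_ball_zero {e : ℂ} (he : ‖e‖ = 1) {r R t : ℝ} (hr : 0 ≤ r) (hrR : r < R)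
    (ht : t ∈ Set.uIcc 0 r) : (t : ℂ) * e ∈ ball (0 : ℂ) R := by
  rw [Set.uIcc_of_le hr] at ht
  rw [mem_ball_zero_iff, norm_mul, he, mul_one, Complex.norm_real, Real.norm_of_nonneg ht.1]
  exact ht.2.trans_lt hrR

theorem gabriel_identity_general (p w : ℂ → ℂ)
    (hp : AnalyticOnNhd ℂ p (ball (0 : ℂ) 1))
    (hw : AnalyticOnNhd ℂ w (ball (0 : ℂ) 1))
    (hode : ∀ z ∈ ball (0 : ℂ) 1, deriv (deriv w) z + p z * w z = 0)
    (h0 : w 0 = 0)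
    (r θ : ℝ) (hr0 : 0 < r) (hr1 : r < 1) :
    (‖w (r * Complex.exp (θ * Complex.I))‖) ^ 2 *
        ((r * Complex.exp (θ * Complex.I) *
            deriv w (r * Complex.exp (θ * Complex.I)) /
            w (r * Complex.exp (θ * Complex.I))).re) =
      (r * ∫ ρ in (0 : ℝ)..r,
          (‖deriv w (ρ * Complex.exp (θ * Complex.I))‖) ^ 2) -
        r * ∫ ρ in (0 : ℝ)..r,
          ((ρ : ℂ) ^ 2 * Complex.exp (2 * θ * Complex.I) *
              p (ρ * Complex.exp (θ * Complex.I))).re *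
            (‖w (ρ * Complex.exp (θ * Complex.I))‖) ^ 2 / ρ ^ 2 := by
  set e := Complex.exp (θ * Complex.I)
  have he : ‖e‖ = 1 := Complex.norm_exp_ofReal_mul_I θ
  have he2 : Complex.exp (2 * θ * Complex.I) = e ^ 2 := by
    rw [← Complex.exp_nat_mul]; ring_nf
  have hmem := fun t => ofReal_mul_mem_ball_zero he hr0.le hr1 (t := t)
  have hlagrange := re_conj_mul_deriv_sub_eq_integral_sub_integral
    (f := fun t : ℝ => w (t * e)) (f' := fun t : ℝ => e * deriv w (t * e))
    (f'' := fun t : ℝ => e * (e * deriv (deriv w) (t * e))) (q := fun t : ℝ => e ^ 2 * p (t * e))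
    (fun t ht => hasDerivAt_comp_ofReal_mul (hw _ (hmem t ht)).differentiableAt.hasDerivAt)
    (fun t ht => (hasDerivAt_comp_ofReal_mul
      (hw.deriv _ (hmem t ht)).differentiableAt.hasDerivAt).const_mul e)
    (fun t ht => by rw [eq_neg_of_add_eq_zero_left (hode _ (hmem t ht))]; ring)
    (continuousOn_const.mul (hp.continuousOn.comp (by fun_prop) fun t ht => hmem t ht))
  have hweight : ∀ᵐ ρ : ℝ, ρ ∈ Set.uIoc 0 r →
      ((ρ : ℂ) ^ 2 * e ^ 2 * p (ρ * e)).re * ‖w (ρ * e)‖ ^ 2 / ρ ^ 2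
        = (e ^ 2 * p (ρ * e)).re * ‖w (ρ * e)‖ ^ 2 := by
    filter_upwards [MeasureTheory.Measure.ae_ne _ 0] with ρ hρ _
    rw [mul_assoc, ← Complex.ofReal_pow, Complex.re_ofReal_mul]
    field_simp [hρ]
  simp only [Complex.ofReal_zero, zero_mul, h0, map_zero, Complex.zero_re, sub_zero, norm_mul,
    he, one_mul] at hlagrange
  rw [Complex.norm_sq_mul_re_div, he2, integral_congr_ae hweight, ← mul_sub, ← hlagrange,
    ← Complex.re_ofReal_mul]
  ring_nf

/-- Gabriel's identity: if `w` solves `w'' + p w = 0` on the unit disk with `w(0)=0`,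
`w'(0)=1`, then for `0 < r < 1` and fixed `θ` (with `w(re^{iθ}) ≠ 0`):
`|w(re^{iθ})|² Re(re^{iθ} w'/w) = r∫₀ʳ |w'|² dρ - r∫₀ʳ Re(ρ²e^{2iθ} p) |w|²/ρ² dρ`. -/
theorem gabriel_identity (p w : ℂ → ℂ)
    (hp : AnalyticOnNhd ℂ p (ball (0 : ℂ) 1))
    (hw : AnalyticOnNhd ℂ w (ball (0 : ℂ) 1))
    (hode : ∀ z ∈ ball (0 : ℂ) 1, deriv (deriv w) z + p z * w z = 0)
    (h0 : w 0 = 0) (h1 : deriv w 0 = 1)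
    (r θ : ℝ) (hr0 : 0 < r) (hr1 : r < 1)
    (hne : w (r * Complex.exp (θ * Complex.I)) ≠ 0) :
    (‖w (r * Complex.exp (θ * Complex.I))‖) ^ 2 *
        ((r * Complex.exp (θ * Complex.I) *
            deriv w (r * Complex.exp (θ * Complex.I)) /
            w (r * Complex.exp (θ * Complex.I))).re) =
      (r * ∫ ρ in (0 : ℝ)..r,
          (‖deriv w (ρ * Complex.exp (θ * Complex.I))‖) ^ 2) -
        r * ∫ ρ in (0 : ℝ)..r,
          ((ρ : ℂ) ^ 2 * Complex.exp (2 * θ * Complex.I) *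
              p (ρ * Complex.exp (θ * Complex.I))).re *
            (‖w (ρ * Complex.exp (θ * Complex.I))‖) ^ 2 / ρ ^ 2 :=
  gabriel_identity_general p w hp hw hode h0 r θ hr0 hr1
end

section
/- Let 0 ≤ α < 1 and c_α the smallest positive root of 2√x - (1+α) tan √x = 0. For any ε > 0 with c = c_α + ε (and √c < π/2, say), the function f(z) = √c cot(√c z) satisfies S_f(z) = 2c for all z, but f is not meromorphically convex of order α in the unit disk: there exists x_0 ∈ (0,1) with -Re(1 + x_0 f''(x_0)/f'(x_0)) ≤ α. -/
/-- The Schwarzian derivative `S_f = (f''/f')' - (1/2)(f''/f')^2`. -/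
noncomputable def schwarzian (f : ℂ → ℂ) (z : ℂ) : ℂ :=
  deriv (fun w => deriv (deriv f) w / deriv f w) z
    - (1 / 2) * (deriv (deriv f) z / deriv f z) ^ 2

/-!
`f = s cot(s z)` satisfies the Riccati equation `f' = -s² - f²`, so `f''/f' = -2f` and
`S_f = -2f' - 2f² = 2s²`. The same identity gives `-(1 + z f''/f') = 2 (s z) cot(s z) - 1`,
which on the real axis at `s x₀ = √c_α` equals `α` exactly, because `√c_α` solves
`2t = (1 + α) tan t`; and `x₀ = √c_α / √c < 1` as soon as `c > c_α`.
-/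

open Complex Filter Topology

noncomputable def scaledCot (s z : ℂ) : ℂ :=
  s * (cos (s * z) / sin (s * z))

lemma isOpen_setOf_sin_mul_ne_zero (s : ℂ) : IsOpen {z : ℂ | sin (s * z) ≠ 0} :=
  isOpen_ne_fun (by fun_prop) continuous_const

lemma hasDerivAt_sin_mul (s z : ℂ) : HasDerivAt (fun w => sin (s * w)) (cos (s * z) * s) z := by
  simpa using ((hasDerivAt_id z).const_mul s).csin

lemma hasDerivAt_cos_mul (s z : ℂ) : HasDerivAt (fun w => cos (s * w)) (-sin (s * z) * s) z := by
  simpa using ((hasDerivAt_id z).const_mul s).ccos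

section ScaledCot

variable {s z : ℂ}

lemma hasDerivAt_scaledCot (hz : sin (s * z) ≠ 0) :
    HasDerivAt (scaledCot s) (-s ^ 2 / sin (s * z) ^ 2) z := by
  refine (((hasDerivAt_cos_mul s z).div (hasDerivAt_sin_mul s z) hz).const_mul s).congr_deriv ?_
  field_simp
  linear_combination -s ^ 2 * sin_sq_add_cos_sq (s * z)

lemma deriv_scaledCot_eventuallyEq (hz : sin (s * z) ≠ 0) :
    deriv (scaledCot s) =ᶠ[𝓝 z] fun w => -s ^ 2 / sin (s * w) ^ 2 :=
  eventually_of_mem ((isOpen_setOf_sin_mul_ne_zero s).mem_nhds hz)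
    fun _ hw => (hasDerivAt_scaledCot hw).deriv

lemma hasDerivAt_deriv_scaledCot (hz : sin (s * z) ≠ 0) :
    HasDerivAt (deriv (scaledCot s)) (2 * s ^ 3 * cos (s * z) / sin (s * z) ^ 3) z := by
  have hsq : HasDerivAt (fun w => sin (s * w) ^ 2) (2 * sin (s * z) * (cos (s * z) * s)) z := by
    simpa using (hasDerivAt_sin_mul s z).fun_pow 2
  refine (((hasDerivAt_const z (-s ^ 2)).div hsq (pow_ne_zero 2 hz)).congr_deriv ?_
    ).congr_of_eventuallyEq (deriv_scaledCot_eventuallyEq hz)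
  field_simp
  ring

lemma deriv_deriv_div_deriv_scaledCot (hz : sin (s * z) ≠ 0) :
    deriv (deriv (scaledCot s)) z / deriv (scaledCot s) z = -2 * scaledCot s z := by
  rw [(hasDerivAt_deriv_scaledCot hz).deriv, (hasDerivAt_scaledCot hz).deriv, scaledCot]
  field_simp

lemma schwarzian_scaledCot (hz : sin (s * z) ≠ 0) : schwarzian (scaledCot s) z = 2 * s ^ 2 := by
  have hratio : (fun w => deriv (deriv (scaledCot s)) w / deriv (scaledCot s) w) =ᶠ[𝓝 z]
      fun w => -2 * scaledCot s w :=
    eventually_of_mem ((isOpen_setOf_sin_mul_ne_zero s).mem_nhds hz)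
      fun _ hw => deriv_deriv_div_deriv_scaledCot hw
  rw [schwarzian, hratio.deriv_eq, deriv_const_mul _ (hasDerivAt_scaledCot hz).differentiableAt,
    deriv_deriv_div_deriv_scaledCot hz, (hasDerivAt_scaledCot hz).deriv, scaledCot]
  field_simp
  linear_combination -s ^ 2 * sin_sq_add_cos_sq (s * z)

lemma neg_one_add_mul_deriv_deriv_div_deriv_scaledCot (hz : sin (s * z) ≠ 0) :
    -(1 + z * deriv (deriv (scaledCot s)) z / deriv (scaledCot s) z)
      = 2 * (s * z) * cos (s * z) / sin (s * z) - 1 := by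
  rw [mul_div_assoc, deriv_deriv_div_deriv_scaledCot hz, scaledCot]
  ring

end ScaledCot

-- `Real.tan t = 0` where `cos t = 0`, so a nonzero root of `2t = a tan t` has `sin t ≠ 0 ≠ cos t`.
lemma sin_ne_zero_of_two_mul_eq_mul_tan {t a : ℝ} (ht : t ≠ 0) (h : 2 * t = a * Real.tan t) :
    Real.sin t ≠ 0 := by
  intro hsin
  rw [Real.tan_eq_sin_div_cos, hsin, zero_div, mul_zero] at h
  exact ht (by linarith)

lemma two_mul_cos_div_sin_of_two_mul_eq_mul_tan {t a : ℝ} (ht : t ≠ 0)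
    (h : 2 * t = a * Real.tan t) : 2 * t * Real.cos t / Real.sin t = a := by
  have hcos : Real.cos t ≠ 0 := by
    intro hcos
    rw [Real.tan_eq_sin_div_cos, hcos, div_zero, mul_zero] at h
    exact ht (by linarith)
  rw [h, Real.tan_eq_sin_div_cos]
  field_simp [sin_ne_zero_of_two_mul_eq_mul_tan ht h]

theorem sharpness_general (α cα ε : ℝ)
    (hcα : 0 < cα)
    (hroot : 2 * Real.sqrt cα - (1 + α) * Real.tan (Real.sqrt cα) = 0)
    (hε : 0 < ε) (c : ℝ) (hc : c = cα + ε)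
    (f : ℂ → ℂ)
    (hf : ∀ z, f z = (Real.sqrt c : ℂ) *
      (Complex.cos ((Real.sqrt c : ℂ) * z) / Complex.sin ((Real.sqrt c : ℂ) * z))) :
    (∀ z : ℂ, Complex.sin ((Real.sqrt c : ℂ) * z) ≠ 0 → schwarzian f z = 2 * c) ∧
      ∃ x₀ : ℝ, 0 < x₀ ∧ x₀ < 1 ∧
        (-(1 + (x₀ : ℂ) * deriv (deriv f) x₀ / deriv f x₀)).re ≤ α := by
  obtain rfl : f = scaledCot (Real.sqrt c) := funext hf
  have hc0 : 0 < c := by linarith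
  have hsc : 0 < Real.sqrt c := Real.sqrt_pos.mpr hc0
  have ht : 0 < Real.sqrt cα := Real.sqrt_pos.mpr hcα
  have hroot' : 2 * Real.sqrt cα = (1 + α) * Real.tan (Real.sqrt cα) := sub_eq_zero.mp hroot
  refine ⟨fun z hz => ?_, Real.sqrt cα / Real.sqrt c, div_pos ht hsc,
    (div_lt_one hsc).mpr (Real.sqrt_lt_sqrt hcα.le (by linarith)), ?_⟩
  · rw [schwarzian_scaledCot hz, ← ofReal_pow, Real.sq_sqrt hc0.le]
  · have hx₀ : (Real.sqrt c : ℂ) * ↑(Real.sqrt cα / Real.sqrt c) = Real.sqrt cα := by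
      rw [ofReal_div, mul_div_cancel₀ _ (ofReal_ne_zero.mpr hsc.ne')]
    have hsin := sin_ne_zero_of_two_mul_eq_mul_tan ht.ne' hroot'
    rw [neg_one_add_mul_deriv_deriv_div_deriv_scaledCot (by rw [hx₀]; exact_mod_cast hsin), hx₀,
      ← ofReal_cos, ← ofReal_sin]
    norm_cast
    rw [two_mul_cos_div_sin_of_two_mul_eq_mul_tan ht.ne' hroot']
    simp

/-- Theorem 1(b) (sharpness): for `c = c_α + ε > c_α` (with `√c < π/2`), the function
`f(z) = √c cot(√c z)` has `S_f ≡ 2c` but is not meromorphically convex of order `α`. -/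
theorem sharpness (α cα ε : ℝ) (hα0 : 0 ≤ α) (hα1 : α < 1)
    (hcα : 0 < cα)
    (hroot : 2 * Real.sqrt cα - (1 + α) * Real.tan (Real.sqrt cα) = 0)
    (hmin : ∀ x : ℝ, 0 < x →
      2 * Real.sqrt x - (1 + α) * Real.tan (Real.sqrt x) = 0 → cα ≤ x)
    (hε : 0 < ε) (c : ℝ) (hc : c = cα + ε)
    (hcπ : Real.sqrt c < Real.pi / 2)
    (f : ℂ → ℂ)
    (hf : ∀ z, f z = (Real.sqrt c : ℂ) *
      (Complex.cos ((Real.sqrt c : ℂ) * z) / Complex.sin ((Real.sqrt c : ℂ) * z))) :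
    (∀ z : ℂ, Complex.sin ((Real.sqrt c : ℂ) * z) ≠ 0 → schwarzian f z = 2 * c) ∧
      ∃ x₀ : ℝ, 0 < x₀ ∧ x₀ < 1 ∧
        (-(1 + (x₀ : ℂ) * deriv (deriv f) x₀ / deriv f x₀)).re ≤ α :=
  sharpness_general α cα ε hcα hroot hε c hc f hf
end

section
/- The parameter map α ↦ c_α, where c_α is the smallest positive root of 2√x - (1+α) tan √x = 0 for 0 ≤ α < 1, is strictly decreasing in α. -/
open Real

private lemma aux_strictAntiOn :
    StrictAntiOn (fun t : ℝ => t * Real.cos t / Real.sin t) (Set.Ioo 0 (π/2)) := by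
  have hopen : IsOpen (Set.Ioo (0:ℝ) (π/2)) := isOpen_Ioo
  apply strictAntiOn_of_deriv_neg (convex_Ioo _ _)
  · apply ContinuousOn.div
    · exact (continuous_id.mul Real.continuous_cos).continuousOn
    · exact Real.continuous_sin.continuousOn
    · intro x hx
      exact ne_of_gt (Real.sin_pos_of_pos_of_lt_pi hx.1 (hx.2.trans (by
        have := Real.pi_pos; linarith)))
  · intro x hx
    rw [hopen.interior_eq] at hx
    have hx0 : 0 < x := hx.1
    have hxlt : x < π/2 := hx.2
    have hsin : 0 < Real.sin x :=
      Real.sin_pos_of_pos_of_lt_pi hx0 (hxlt.trans (by have := Real.pi_pos; linarith))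
    have h1 : HasDerivAt (fun t : ℝ => t * Real.cos t)
        (1 * Real.cos x + x * (-Real.sin x)) x :=
      (hasDerivAt_id x).mul (Real.hasDerivAt_cos x)
    have h2 : HasDerivAt (fun t : ℝ => t * Real.cos t / Real.sin t)
        (((1 * Real.cos x + x * (-Real.sin x)) * Real.sin x
          - (x * Real.cos x) * Real.cos x) / Real.sin x ^ 2) x :=
      h1.div (Real.hasDerivAt_sin x) hsin.ne'
    rw [h2.deriv]
    apply div_neg_of_neg_of_pos _ (by positivity)
    have hsc : Real.sin x * Real.cos x < x := by
      have h2x : Real.sin (2*x) < 2*x := Real.sin_lt (by linarith)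
      rw [Real.sin_two_mul] at h2x
      linarith
    nlinarith [Real.sin_sq_add_cos_sq x]

private lemma aux_sqrt_lt (α c : ℝ) (hα0 : 0 ≤ α) (hα1 : α < 1) (hc : 0 < c)
    (hmin : ∀ x : ℝ, 0 < x →
      2 * Real.sqrt x - (1 + α) * Real.tan (Real.sqrt x) = 0 → c ≤ x) :
    Real.sqrt c < π/2 := by
  set b := Real.arctan (π + 1) with hb_def
  have hπ := Real.pi_pos
  have hb0 : 0 < b := by
    have := Real.arctan_strictMono (show (0:ℝ) < π + 1 by linarith)
    rwa [Real.arctan_zero] at this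
  have hb2 : b < π/2 := Real.arctan_lt_pi_div_two _
  have htanb : Real.tan b = π + 1 := Real.tan_arctan _
  -- choose s small
  set s := min (Real.sqrt (1 - α) / 2) (b/2) with hs_def
  have hsq : 0 < Real.sqrt (1 - α) := Real.sqrt_pos.2 (by linarith)
  have hs0 : 0 < s := lt_min (by linarith) (by linarith)
  have hsb : s < b := (min_le_right _ _).trans_lt (by linarith)
  have hs2 : s < π/2 := hsb.trans hb2
  have hcos_s : (1 + α)/2 < Real.cos s := by
    have h1 : s ≤ Real.sqrt (1 - α) / 2 := min_le_left _ _
    have h2 : s ^ 2 ≤ (1 - α) / 4 := by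
      have := Real.sq_sqrt (by linarith : (0:ℝ) ≤ 1 - α)
      nlinarith
    have := Real.one_sub_sq_div_two_lt_cos (x := s) hs0.ne'
    nlinarith
  have hcos_s_pos : 0 < Real.cos s := by linarith
  -- g s > 0
  have hgs : 0 < 2 * s - (1 + α) * Real.tan s := by
    have hsin_le : Real.sin s ≤ s := Real.sin_le hs0.le
    have htan : Real.tan s ≤ s / Real.cos s := by
      rw [Real.tan_eq_sin_div_cos]
      gcongr
    have h1 : (1 + α) * Real.tan s ≤ (1 + α) * (s / Real.cos s) :=
      mul_le_mul_of_nonneg_left htan (by linarith)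
    have h2 : (1 + α) * (s / Real.cos s) < 2 * s := by
      have he : (1 + α) * (s / Real.cos s) = ((1 + α) * s) / Real.cos s := by ring
      rw [he, div_lt_iff₀ hcos_s_pos]
      nlinarith
    linarith
  -- g b < 0
  have hgb : 2 * b - (1 + α) * Real.tan b < 0 := by
    rw [htanb]; nlinarith
  -- IVT
  have hcont : ContinuousOn (fun t => 2 * t - (1 + α) * Real.tan t) (Set.Icc s b) := by
    apply ContinuousOn.sub (by fun_prop)
    apply ContinuousOn.mul continuousOn_const
    apply Real.continuousOn_tan.mono
    intro x hx
    simp only [Set.mem_setOf_eq]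
    exact ne_of_gt (Real.cos_pos_of_mem_Ioo ⟨by linarith [hx.1], lt_of_le_of_lt hx.2 hb2⟩)
  have hmem : (0:ℝ) ∈ Set.Icc (2 * b - (1 + α) * Real.tan b) (2 * s - (1 + α) * Real.tan s) :=
    ⟨hgb.le, hgs.le⟩
  obtain ⟨t, ht_mem, ht_eq⟩ := intermediate_value_Icc' hsb.le hcont hmem
  have ht0 : 0 < t := lt_of_lt_of_le hs0 ht_mem.1
  have hx_pos : (0:ℝ) < t ^ 2 := by positivity
  have hsqrt : Real.sqrt (t ^ 2) = t := Real.sqrt_sq ht0.le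
  have hroot : 2 * Real.sqrt (t^2) - (1 + α) * Real.tan (Real.sqrt (t^2)) = 0 := by
    rw [hsqrt]; exact ht_eq
  have hc_le := hmin (t^2) hx_pos hroot
  have : Real.sqrt c ≤ t := by
    calc Real.sqrt c ≤ Real.sqrt (t^2) := Real.sqrt_le_sqrt hc_le
    _ = t := hsqrt
  linarith [ht_mem.2, this]

/-- The map `α ↦ c_α` (smallest positive root of `2√x - (1+α) tan √x = 0`) is strictly
decreasing on `[0,1)`. -/
theorem c_alpha_strict_anti (α₁ α₂ c₁ c₂ : ℝ)
    (hα₁0 : 0 ≤ α₁) (hα₂1 : α₂ < 1) (hlt : α₁ < α₂)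
    (hc₁ : 0 < c₁) (hc₂ : 0 < c₂)
    (hroot₁ : 2 * Real.sqrt c₁ - (1 + α₁) * Real.tan (Real.sqrt c₁) = 0)
    (hmin₁ : ∀ x : ℝ, 0 < x →
      2 * Real.sqrt x - (1 + α₁) * Real.tan (Real.sqrt x) = 0 → c₁ ≤ x)
    (hroot₂ : 2 * Real.sqrt c₂ - (1 + α₂) * Real.tan (Real.sqrt c₂) = 0)
    (hmin₂ : ∀ x : ℝ, 0 < x →
      2 * Real.sqrt x - (1 + α₂) * Real.tan (Real.sqrt x) = 0 → c₂ ≤ x) :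
    c₂ < c₁ := by
  have hα₁1 : α₁ < 1 := hlt.trans hα₂1
  have hα₂0 : 0 ≤ α₂ := hα₁0.trans hlt.le
  set t₁ := Real.sqrt c₁ with ht₁
  set t₂ := Real.sqrt c₂ with ht₂
  have ht₁0 : 0 < t₁ := Real.sqrt_pos.2 hc₁
  have ht₂0 : 0 < t₂ := Real.sqrt_pos.2 hc₂
  have ht₁lt : t₁ < π/2 := aux_sqrt_lt α₁ c₁ hα₁0 hα₁1 hc₁ hmin₁
  have ht₂lt : t₂ < π/2 := aux_sqrt_lt α₂ c₂ hα₂0 hα₂1 hc₂ hmin₂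
  have hπ := Real.pi_pos
  have hsin₁ : 0 < Real.sin t₁ := Real.sin_pos_of_pos_of_lt_pi ht₁0 (by linarith)
  have hsin₂ : 0 < Real.sin t₂ := Real.sin_pos_of_pos_of_lt_pi ht₂0 (by linarith)
  have hcos₁ : 0 < Real.cos t₁ := Real.cos_pos_of_mem_Ioo ⟨by linarith, ht₁lt⟩
  have hcos₂ : 0 < Real.cos t₂ := Real.cos_pos_of_mem_Ioo ⟨by linarith, ht₂lt⟩
  -- f tᵢ = (1+αᵢ)/2
  have hf₁ : t₁ * Real.cos t₁ / Real.sin t₁ = (1 + α₁)/2 := by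
    rw [Real.tan_eq_sin_div_cos] at hroot₁
    field_simp at hroot₁ ⊢
    nlinarith
  have hf₂ : t₂ * Real.cos t₂ / Real.sin t₂ = (1 + α₂)/2 := by
    rw [Real.tan_eq_sin_div_cos] at hroot₂
    field_simp at hroot₂ ⊢
    nlinarith
  have ht : t₂ < t₁ := by
    by_contra h
    push_neg at h
    rcases eq_or_lt_of_le h with heq | hlt'
    · rw [heq] at hf₁
      rw [hf₂] at hf₁
      linarith
    · have := aux_strictAntiOn ⟨ht₁0, ht₁lt⟩ ⟨ht₂0, ht₂lt⟩ hlt'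
      simp only at this
      rw [hf₁, hf₂] at this
      linarith
  calc c₂ = t₂ ^ 2 := (Real.sq_sqrt hc₂.le).symm
  _ < t₁ ^ 2 := by nlinarith
  _ = c₁ := Real.sq_sqrt hc₁.le
end

section
/- Let g(z) = z + a_2 z² + ... be analytic and locally univalent in the unit disk with |a_2| = η < 1/5, and suppose sup_{|z|<1} |S_g(z)| = 2δ where 10η + 9δ(1+η)e^{δ/2} < 2. Then Re(1 + z g''(z)/g'(z)) < 3/2 for all |z| < 1, and consequently g is starlike, i.e., Re(z g'(z)/g(z)) > 0 on the disk. -/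
/-!
The pre-Schwarzian `q = g''/g'` obeys the Riccati equation `q' = S_g + q²/2`, so
`‖q'‖ ≤ 2δ + ‖q‖²/2` and `‖q 0‖ = 2η`. Along each radius `‖q‖` is fenced by the explicit solution
`2(η + C s)/(1 - η s - C s²/2)` of a slightly larger Riccati equation (`δ < C`), which stays below
`1/2` on `[0, 1]` because `10η + 9C < 2`. Thus `‖q‖ < 1/2` on the disk, whence
`Re(1 + z q) < 3/2`.

For starlikeness, `g'' = q g'` with `‖q‖ < 1/2` gives `‖g' - 1‖ ≤ e^{1/2} - 1` by Grönwall, and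
then `‖g(z)/z - 1‖ ≤ e^{1/2} - 1` by the mean value inequality. As `(e^{1/2} - 1)² < 1/2`, both
`g'(z)` and `g(z)/z` lie in the sector `|arg| < π/4`, so their quotient `z g'(z)/g(z)` has positive
real part.
-/

open Metric

open Set

noncomputable def preSchwarzian (f : ℂ → ℂ) (z : ℂ) : ℂ :=
  deriv (deriv f) z / deriv f z

theorem deriv_preSchwarzian (f : ℂ → ℂ) (z : ℂ) :
    deriv (preSchwarzian f) z = schwarzian f z + preSchwarzian f z ^ 2 / 2 := by
  unfold schwarzian preSchwarzian
  ring

-- With `D s = 1 - a s - C s²/2` its denominator, `riccatiBound a C` solves `y' = 2C/D + y²/2`,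
-- `y 0 = 2a`; since `0 < D ≤ 1`, it is a strict supersolution of `y' = 2δ + y²/2` for `δ < C`.
noncomputable def riccatiBound (a C s : ℝ) : ℝ :=
  2 * (a + C * s) / (1 - a * s - C * s ^ 2 / 2)

theorem hasDerivAt_riccatiBound {a C s : ℝ} (hD : 1 - a * s - C * s ^ 2 / 2 ≠ 0) :
    HasDerivAt (riccatiBound a C)
      (2 * C / (1 - a * s - C * s ^ 2 / 2) + riccatiBound a C s ^ 2 / 2) s := by
  have hnum : HasDerivAt (fun s => 2 * (a + C * s)) (2 * C) s := by
    simpa using (((hasDerivAt_id' s).const_mul C).const_add a).const_mul 2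
  have hden : HasDerivAt (fun s => 1 - a * s - C * s ^ 2 / 2) (-(a + C * s)) s := by
    refine ((((hasDerivAt_id' s).const_mul a).const_sub 1).sub
      (((hasDerivAt_pow 2 s).const_mul C).div_const 2)).congr_deriv ?_
    push_cast
    ring
  refine (hnum.div hden hD).congr_deriv ?_
  unfold riccatiBound
  field_simp
  ring

theorem norm_le_riccatiBound {E : Type*} [NormedAddCommGroup E] [NormedSpace ℝ E]
    {f f' : ℝ → E} {a δ C R : ℝ}
    (hf : ContinuousOn f (Icc 0 R)) (hf' : ∀ s ∈ Ico 0 R, HasDerivWithinAt f (f' s) (Ici s) s)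
    (hf0 : ‖f 0‖ ≤ 2 * a) (hC : 0 ≤ C) (hδC : δ < C)
    (hD : ∀ s ∈ Icc 0 R, 0 < 1 - a * s - C * s ^ 2 / 2)
    (hderiv : ∀ s ∈ Ico 0 R, ‖f' s‖ ≤ 2 * δ + ‖f s‖ ^ 2 / 2) :
    ∀ s ∈ Icc 0 R, ‖f s‖ ≤ riccatiBound a C s := by
  have ha : 0 ≤ a := by linarith [norm_nonneg (f 0)]
  refine fun s hs => image_norm_le_of_norm_deriv_right_lt_deriv_boundary' hf hf'
    (by simpa [riccatiBound] using hf0)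
    (fun s hs => (hasDerivAt_riccatiBound (hD s hs).ne').continuousAt.continuousWithinAt)
    (fun s hs => (hasDerivAt_riccatiBound (hD s (Ico_subset_Icc_self hs)).ne').hasDerivWithinAt)
    (fun s hs hfs => ?_) hs
  have hDs := hD s (Ico_subset_Icc_self hs)
  have hD1 : 1 - a * s - C * s ^ 2 / 2 ≤ 1 := by nlinarith [hs.1]
  calc ‖f' s‖ ≤ 2 * δ + riccatiBound a C s ^ 2 / 2 := hfs ▸ hderiv s hs
    _ < 2 * C + riccatiBound a C s ^ 2 / 2 := by linarith
    _ ≤ 2 * C / (1 - a * s - C * s ^ 2 / 2) + riccatiBound a C s ^ 2 / 2 := by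
      gcongr
      exact le_div_self (by positivity) hDs hD1

theorem smul_mem_ball_zero_one {w : ℂ} {s : ℝ} (hw : w ∈ ball (0 : ℂ) 1)
    (hs : s ∈ Icc 0 1) : s • w ∈ ball (0 : ℂ) 1 :=
  (convex_ball 0 1).smul_mem_of_zero_mem (mem_ball_self one_pos) hw hs

theorem hasDerivAt_comp_real_smul {f : ℂ → ℂ} {w : ℂ} {s : ℝ}
    (hf : DifferentiableAt ℂ f (s • w)) :
    HasDerivAt (fun t : ℝ => f (t • w)) (deriv f (s • w) * w) s := by
  have := hf.hasDerivAt.comp s ((hasDerivAt_id s).smul_const w)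
  rwa [one_smul] at this

theorem norm_lt_half_of_norm_deriv_le {q : ℂ → ℂ} {a δ : ℝ}
    (hq : DifferentiableOn ℂ q (ball 0 1)) (hq0 : ‖q 0‖ ≤ 2 * a) (hδ : 0 ≤ δ)
    (hsmall : 10 * a + 9 * δ < 2)
    (hderiv : ∀ w ∈ ball (0 : ℂ) 1, ‖deriv q w‖ ≤ 2 * δ + ‖q w‖ ^ 2 / 2) :
    ∀ w ∈ ball (0 : ℂ) 1, ‖q w‖ < 1 / 2 := by
  intro w hw
  have ha : 0 ≤ a := by linarith [norm_nonneg (q 0)]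
  -- `10 a + 9 C < 2` is exactly `riccatiBound a C 1 < 1 / 2`.
  obtain ⟨C, hδC, hCsmall⟩ : ∃ C, δ < C ∧ C < (2 - 10 * a) / 9 := exists_between (by linarith)
  have hD : ∀ s ∈ Icc (0 : ℝ) 1, 0 < 1 - a * s - C * s ^ 2 / 2 := fun s hs => by
    nlinarith [hs.1, hs.2, mul_le_mul_of_nonneg_left hs.2 ha,
      mul_le_mul_of_nonneg_left (pow_le_one₀ hs.1 hs.2 : s ^ 2 ≤ 1) (hδ.trans hδC.le)]
  have hmem : ∀ s ∈ Icc (0 : ℝ) 1, s • w ∈ ball (0 : ℂ) 1 :=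
    fun s hs => smul_mem_ball_zero_one hw hs
  have hqd : ∀ s ∈ Icc (0 : ℝ) 1,
      HasDerivAt (fun t : ℝ => q (t • w)) (deriv q (s • w) * w) s := fun s hs =>
    hasDerivAt_comp_real_smul (hq.differentiableAt (isOpen_ball.mem_nhds (hmem s hs)))
  have hw1 : ‖w‖ ≤ 1 := (mem_ball_zero_iff.mp hw).le
  have hbound := norm_le_riccatiBound (f := fun t : ℝ => q (t • w))
    (fun s hs => (hqd s hs).continuousAt.continuousWithinAt)
    (fun s hs => (hqd s (Ico_subset_Icc_self hs)).hasDerivWithinAt)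
    (by simpa using hq0) (hδ.trans hδC.le) hδC hD
    (fun s hs => by
      have hs' := Ico_subset_Icc_self hs
      rw [norm_mul]
      calc ‖deriv q (s • w)‖ * ‖w‖ ≤ ‖deriv q (s • w)‖ :=
            mul_le_of_le_one_right (norm_nonneg _) hw1
        _ ≤ _ := hderiv _ (hmem s hs')) 1 ⟨zero_le_one, le_rfl⟩
  have hD1 := hD 1 ⟨zero_le_one, le_rfl⟩
  calc ‖q w‖ ≤ riccatiBound a C 1 := by simpa using hbound
    _ < 1 / 2 := by
      rw [riccatiBound, div_lt_iff₀ hD1]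
      linarith

theorem norm_sub_one_le_exp_sub_one {h : ℂ → ℂ} {K : ℝ} (hK : 0 < K)
    (hh : DifferentiableOn ℂ h (ball 0 1)) (h0 : h 0 = 1)
    (hderiv : ∀ w ∈ ball (0 : ℂ) 1, ‖deriv h w‖ ≤ K * ‖h w‖) :
    ∀ w ∈ ball (0 : ℂ) 1, ‖h w - 1‖ ≤ Real.exp K - 1 := by
  intro w hw
  have hmem : ∀ s ∈ Icc (0 : ℝ) 1, s • w ∈ ball (0 : ℂ) 1 :=
    fun s hs => smul_mem_ball_zero_one hw hs
  have hhd : ∀ s ∈ Icc (0 : ℝ) 1,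
      HasDerivAt (fun t : ℝ => h (t • w) - 1) (deriv h (s • w) * w) s := fun s hs =>
    (hasDerivAt_comp_real_smul
      (hh.differentiableAt (isOpen_ball.mem_nhds (hmem s hs)))).sub_const 1
  have hw1 : ‖w‖ ≤ 1 := (mem_ball_zero_iff.mp hw).le
  have hgronwall := norm_le_gronwallBound_of_norm_deriv_right_le (δ := 0) (K := K) (ε := K)
    (fun s hs => (hhd s hs).continuousAt.continuousWithinAt)
    (fun s hs => (hhd s (Ico_subset_Icc_self hs)).hasDerivWithinAt)
    (by simp [h0])
    (fun s hs => by
      have hs' := Ico_subset_Icc_self hs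
      calc ‖deriv h (s • w) * w‖ ≤ ‖deriv h (s • w)‖ := by
            rw [norm_mul]; exact mul_le_of_le_one_right (norm_nonneg _) hw1
        _ ≤ K * ‖h (s • w)‖ := hderiv _ (hmem s hs')
        _ ≤ K * ‖h (s • w) - 1‖ + K := by
            have := norm_le_norm_sub_add (h (s • w)) 1
            rw [norm_one] at this
            nlinarith)
    1 ⟨zero_le_one, le_rfl⟩
  simpa [gronwallBound_of_K_ne_0 hK.ne', hK.ne'] using hgronwall

theorem norm_div_self_sub_one_le {f : ℂ → ℂ} {ρ : ℝ}
    (hf : DifferentiableOn ℂ f (ball 0 1)) (hf0 : f 0 = 0)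
    (hderiv : ∀ w ∈ ball (0 : ℂ) 1, ‖deriv f w - 1‖ ≤ ρ)
    {z : ℂ} (hz : z ∈ ball (0 : ℂ) 1) (hz0 : z ≠ 0) :
    ‖f z / z - 1‖ ≤ ρ := by
  have hdiff : ∀ w ∈ ball (0 : ℂ) 1, DifferentiableAt ℂ f w :=
    fun w hw => hf.differentiableAt (isOpen_ball.mem_nhds hw)
  have hmvt := (convex_ball (0 : ℂ) 1).norm_image_sub_le_of_norm_deriv_le
    (f := fun w => f w - w) (fun w hw => (hdiff w hw).sub differentiableAt_fun_id)
    (fun w hw => by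
      rw [deriv_fun_sub (hdiff w hw) differentiableAt_fun_id, deriv_id'']; exact hderiv w hw)
    (mem_ball_self one_pos) hz
  rw [hf0, sub_zero, sub_zero, sub_zero] at hmvt
  rwa [div_sub_one hz0, norm_div, div_le_iff₀ (norm_pos_iff.mpr hz0)]

theorem Complex.abs_im_lt_re_of_norm_sub_one_sq_lt {x : ℂ} (hx : ‖x - 1‖ ^ 2 < 1 / 2) :
    |x.im| < x.re := by
  rw [Complex.sq_norm, Complex.normSq_apply] at hx
  simp only [Complex.sub_re, Complex.one_re, Complex.sub_im, Complex.one_im, sub_zero] at hx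
  have hre : 0 < x.re := by nlinarith [sq_nonneg x.im]
  exact abs_lt_of_sq_lt_sq (by nlinarith [sq_nonneg (2 * x.re - 1)]) hre.le

theorem Complex.re_div_pos_of_abs_im_lt_re {x v : ℂ} (hx : |x.im| < x.re) (hv : |v.im| < v.re) :
    0 < (x / v).re := by
  have hv0 : 0 < Complex.normSq v := Complex.normSq_pos.mpr fun h => by simp [h] at hv
  have him : |x.im * v.im| < x.re * v.re := by
    rw [abs_mul]; exact mul_lt_mul'' hx hv (abs_nonneg _) (abs_nonneg _)
  rw [Complex.div_re, ← add_div]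
  exact div_pos (by linarith [neg_abs_le (x.im * v.im)]) hv0

theorem exp_half_sub_one_sq_lt : (Real.exp (1 / 2) - 1) ^ 2 < 1 / 2 := by
  have hsq : Real.exp (1 / 2) ^ 2 = Real.exp 1 := by rw [← Real.exp_nat_mul]; norm_num
  have hlt : Real.exp (1 / 2) < 1.65 :=
    abs_lt_of_sq_lt_sq' (by linarith [Real.exp_one_lt_d9]) (by norm_num) |>.2
  have hge : 1 ≤ Real.exp (1 / 2) := Real.one_le_exp (by norm_num)
  nlinarith

theorem corollary1_general (g : ℂ → ℂ)
    (hg : AnalyticOnNhd ℂ g (ball (0 : ℂ) 1))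
    (hg0 : g 0 = 0) (hg1 : deriv g 0 = 1)
    (hg' : ∀ z ∈ ball (0 : ℂ) 1, deriv g z ≠ 0)
    (η δ : ℝ) (hη : η = ‖deriv (deriv g) 0 / 2‖)
    (hδ0 : 0 ≤ δ)
    (hS : ∀ z ∈ ball (0 : ℂ) 1, ‖schwarzian g z‖ ≤ 2 * δ)
    (hineq : 10 * η + 9 * δ * (1 + η) * Real.exp (δ / 2) < 2) :
    (∀ z ∈ ball (0 : ℂ) 1,
        (1 + z * deriv (deriv g) z / deriv g z).re < 3 / 2) ∧
      ∀ z ∈ ball (0 : ℂ) 1, z ≠ 0 → (z * deriv g z / g z).re > 0 := by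
  have hsmall : 10 * η + 9 * δ < 2 := by
    have hfactor : 1 ≤ (1 + η) * Real.exp (δ / 2) :=
      one_le_mul_of_one_le_of_one_le (le_add_of_nonneg_right (hη ▸ norm_nonneg _))
        (Real.one_le_exp (by positivity))
    nlinarith
  have hq : DifferentiableOn ℂ (preSchwarzian g) (ball 0 1) := fun w hw =>
    ((hg.deriv.deriv w hw).div (hg.deriv w hw) (hg' w hw)).differentiableWithinAt
  have hq_lt : ∀ w ∈ ball (0 : ℂ) 1, ‖preSchwarzian g w‖ < 1 / 2 :=
    norm_lt_half_of_norm_deriv_le hq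
      (le_of_eq (by rw [hη, preSchwarzian, hg1, div_one, norm_div, Complex.norm_two]; ring))
      hδ0 hsmall fun w hw => by
        rw [deriv_preSchwarzian]
        refine (norm_add_le _ _).trans (add_le_add (hS w hw) (le_of_eq ?_))
        rw [norm_div, norm_pow, Complex.norm_two]
  refine ⟨fun z hz => ?_, fun z hz hz0 => ?_⟩
  · have hzq : ‖z * preSchwarzian g z‖ < 1 / 2 := by
      rw [norm_mul]
      nlinarith [hq_lt z hz, norm_nonneg z, mem_ball_zero_iff.mp hz]
    rw [mul_div_assoc, Complex.add_re, Complex.one_re]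
    show 1 + (z * preSchwarzian g z).re < 3 / 2
    linarith [Complex.re_le_norm (z * preSchwarzian g z)]
  · have hderiv_near : ∀ w ∈ ball (0 : ℂ) 1, ‖deriv g w - 1‖ ≤ Real.exp (1 / 2) - 1 :=
      norm_sub_one_le_exp_sub_one one_half_pos hg.deriv.differentiableOn hg1 fun w hw => by
        rw [← div_mul_cancel₀ (deriv (deriv g) w) (hg' w hw), norm_mul]
        exact mul_le_mul_of_nonneg_right (hq_lt w hw).le (norm_nonneg _)
    have hmean_near := norm_div_self_sub_one_le hg.differentiableOn hg0 hderiv_near hz hz0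
    have hsector : ∀ x : ℂ, ‖x - 1‖ ≤ Real.exp (1 / 2) - 1 → |x.im| < x.re := fun x hx =>
      Complex.abs_im_lt_re_of_norm_sub_one_sq_lt <|
        (pow_le_pow_left₀ (norm_nonneg _) hx 2).trans_lt exp_half_sub_one_sq_lt
    rw [mul_comm, ← div_div_eq_mul_div]
    exact Complex.re_div_pos_of_abs_im_lt_re (hsector _ (hderiv_near z hz)) (hsector _ hmean_near)

/-- Corollary 1: if `g ∈ A` is locally univalent with `|a₂| = η < 1/5` and
`|S_g| ≤ 2δ` on the disk with `10η + 9δ(1+η)e^{δ/2} < 2`, then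
`Re(1 + zg''/g') < 3/2` on the disk, and `g` is starlike. -/
theorem corollary1 (g : ℂ → ℂ)
    (hg : AnalyticOnNhd ℂ g (ball (0 : ℂ) 1))
    (hg0 : g 0 = 0) (hg1 : deriv g 0 = 1)
    (hg' : ∀ z ∈ ball (0 : ℂ) 1, deriv g z ≠ 0)
    (η δ : ℝ) (hη : η = ‖deriv (deriv g) 0 / 2‖) (hη5 : η < 1 / 5)
    (hδ0 : 0 ≤ δ)
    (hS : ∀ z ∈ ball (0 : ℂ) 1, ‖schwarzian g z‖ ≤ 2 * δ)
    (hineq : 10 * η + 9 * δ * (1 + η) * Real.exp (δ / 2) < 2) :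
    (∀ z ∈ ball (0 : ℂ) 1,
        (1 + z * deriv (deriv g) z / deriv g z).re < 3 / 2) ∧
      ∀ z ∈ ball (0 : ℂ) 1, z ≠ 0 → (z * deriv g z / g z).re > 0 :=
  corollary1_general g hg hg0 hg1 hg' η δ hη hδ0 hS hineq
end
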